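/- arXiv:2104.08611 — 3 statements merged into one kernel-verified Lean document; each statement's English description precedes it below -/
import Mathlib

section
/- Let X_1,…,X_n be independent with X ~ ELS(λ1_n, θ, α1_n; F_b) and Y_1,…,Y_n be independent with Y ~ ELS(λ1_n, δ, α1_n; F_b), i.e. all location parameters equal a common λ and all shape parameters equal a common α > 0, with scale vectors θ = (θ_1,…,θ_n) and δ = (δ_1,…,δ_n). Assume θ, δ both lie in E_+ (or both in D_+) and that w ↦ w²·r̃_b(w) is increasing in w > 0. If θ ⪰^w δ (δ is weakly supermajorized by θ), then X_{n−1:n} ≤_st Y_{n−1:n}, i.e. F_{X_{n−1:n}}(x) ≥ F_{Y_{n−1:n}}(x) for all x > λ. -/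
open Finset

/-- Reversed hazard rate of the baseline distribution: `f_b / F_b`. -/
noncomputable def rtilde (Fb fb : ℝ → ℝ) : ℝ → ℝ := fun w => fb w / Fb w

/-- Hazard rate of the baseline distribution: `f_b / (1 - F_b)`. -/
noncomputable def hrate (Fb fb : ℝ → ℝ) : ℝ → ℝ := fun w => fb w / (1 - Fb w)

/-- CDF of the exponentiated location-scale model `ELS(lam, th, al; F_b)`. -/
noncomputable def elsCDF (Fb : ℝ → ℝ) (lam th al : ℝ) : ℝ → ℝ :=
  fun x => Fb ((x - lam) / th) ^ al

/-- CDF of the second-largest order statistic of `n` independent random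
variables with CDFs `F 0, …, F (n-1)`. -/
noncomputable def secondMaxCDF (n : ℕ) (F : Fin n → ℝ → ℝ) : ℝ → ℝ := fun x =>
  (∑ l : Fin n, ∏ k ∈ Finset.univ.erase l, F k x) -
    ((n : ℝ) - 1) * ∏ k : Fin n, F k x

/-- CDF of the second-largest order statistic of `n` dependent random variables
with marginal CDFs `F i`, coupled by the Archimedean copula with generator `ψ`
(and inverse `φ`). -/
noncomputable def secondMaxCDFdep (n : ℕ) (ψ φ : ℝ → ℝ) (F : Fin n → ℝ → ℝ) : ℝ → ℝ := fun x =>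
  (∑ l : Fin n, ψ (∑ k ∈ Finset.univ.erase l, φ (F k x))) -
    ((n : ℝ) - 1) * ψ (∑ k : Fin n, φ (F k x))

/-- Reversed hazard rate of a CDF `F`: `F' / F`. -/
noncomputable def rhr (F : ℝ → ℝ) : ℝ → ℝ := fun x => deriv F x / F x

/-- Sum of the first `k` coordinates of a vector (partial sum from below). -/
def psum {n : ℕ} (x : Fin n → ℝ) (k : ℕ) : ℝ :=
  ∑ i ∈ Finset.univ.filter (fun i : Fin n => (i : ℕ) < k), x i

/-- Sum of the last `k` coordinates of a vector (partial sum from above). -/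
def ssum {n : ℕ} (x : Fin n → ℝ) (k : ℕ) : ℝ :=
  ∑ i ∈ Finset.univ.filter (fun i : Fin n => n - k ≤ (i : ℕ)), x i

/-- `E₊`: vectors with positive coordinates arranged in ascending order. -/
def EPlus {n : ℕ} (x : Fin n → ℝ) : Prop := (∀ i, 0 < x i) ∧ Monotone x

/-- `D₊`: vectors with positive coordinates arranged in descending order. -/
def DPlus {n : ℕ} (x : Fin n → ℝ) : Prop := (∀ i, 0 < x i) ∧ Antitone x

/-- `ψ` is an `n`-monotone Archimedean copula generator with right-continuous
inverse `φ`. -/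
structure IsArchGen (n : ℕ) (ψ φ : ℝ → ℝ) : Prop where
  cont : Continuous ψ
  one : ψ 0 = 1
  anti : StrictAntiOn ψ (Set.Ici 0)
  tend : Filter.Tendsto ψ Filter.atTop (nhds 0)
  range : ∀ x ≥ (0:ℝ), ψ x ∈ Set.Icc (0:ℝ) 1
  dm_sign : ∀ i ≤ n - 2, ∀ x ≥ (0:ℝ), 0 ≤ (-1:ℝ) ^ i * iteratedDeriv i ψ x
  dm_anti : AntitoneOn (fun x => (-1:ℝ) ^ (n - 2) * iteratedDeriv (n - 2) ψ x) (Set.Ici 0)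
  dm_convex : ConvexOn ℝ (Set.Ici 0) (fun x => (-1:ℝ) ^ (n - 2) * iteratedDeriv (n - 2) ψ x)
  inv_left : ∀ x ≥ (0:ℝ), φ (ψ x) = x
  inv_right : ∀ v ∈ Set.Ioc (0:ℝ) 1, ψ (φ v) = v

/-!
Move the scales along the segment `η(t) = δ + t (θ - δ)` and follow
`H(t) = F_{n-1:n}(x)` for the scale vector `η(t)`. With `u_k = F_b(w_k)^α`, `w_k = (x - λ)/η_k`,
and `T_l = (1 - u_l) ∏_{j ≠ l} u_j` (the probability that `X_l` alone exceeds `x`), the product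
rule gives
`H'(t) = -(α/(x - λ)) ∑_k (θ_k - δ_k) · w_k² r̃_b(w_k) ∑_{l ≠ k} T_l`.
The coefficients `w_k² r̃_b(w_k) ∑_{l ≠ k} T_l` are nonnegative and decrease as `η_k` grows, and
`η(t)` is ordered like `θ` and `δ`, so Abel summation against the partial-sum inequalities of
`θ ⪰^w δ` gives `H' ≥ 0`. The power `F_b(w_k)^α` may fail to be differentiable only where
`F_b(w_k)` vanishes without vanishing nearby; as `t ↦ F_b(w_k(t))` is monotone this happens for at
most one `t` per coordinate, and a continuous function with nonnegative derivative off a finite set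
is monotone.
-/

open Filter Topology

theorem Finset.sum_mul_nonpos_of_antitoneOn {ι : Type*} [LinearOrder ι] {v c : ι → ℝ}
    (s : Finset ι) (hc0 : ∀ i ∈ s, 0 ≤ c i) (hc : AntitoneOn c s)
    (hv : ∀ j ∈ s, ∑ i ∈ s with i ≤ j, v i ≤ 0) :
    ∑ i ∈ s, v i * c i ≤ 0 := by
  classical
  induction s using Finset.induction_on_max generalizing c with
  | empty => simp
  | insert a s has ih =>
    have ha : a ∉ s := fun h => (has a h).false
    have hsum : ∑ i ∈ insert a s, v i ≤ 0 := by
      have := hv a (mem_insert_self a s)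
      rwa [filter_true_of_mem fun i hi => ?_] at this
      rcases mem_insert.1 hi with rfl | hi
      · exact le_rfl
      · exact (has i hi).le
    have hrest : ∑ i ∈ s, v i * (c i - c a) ≤ 0 := by
      refine ih (fun i hi => sub_nonneg.2 ?_) (fun i hi j hj hij => ?_) (fun j hj => ?_)
      · exact hc (mem_insert_of_mem hi) (mem_insert_self a s) (has i hi).le
      · exact sub_le_sub_right (hc (mem_insert_of_mem hi) (mem_insert_of_mem hj) hij) _
      · have := hv j (mem_insert_of_mem hj)
        rwa [filter_insert, if_neg (not_le.2 (has j hj))] at this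
    calc ∑ i ∈ insert a s, v i * c i
        = ∑ i ∈ insert a s, v i * (c i - c a) + c a * ∑ i ∈ insert a s, v i := by
          rw [mul_sum, ← sum_add_distrib]
          exact sum_congr rfl fun i _ => by ring
      _ = ∑ i ∈ s, v i * (c i - c a) + c a * ∑ i ∈ insert a s, v i := by
          rw [sum_insert ha, sub_self, mul_zero, zero_add]
      _ ≤ 0 :=
          add_nonpos hrest (mul_nonpos_of_nonneg_of_nonpos (hc0 a (mem_insert_self a s)) hsum)

theorem Finset.sum_mul_nonpos_of_monotoneOn {ι : Type*} [LinearOrder ι] {v c : ι → ℝ}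
    (s : Finset ι) (hc0 : ∀ i ∈ s, 0 ≤ c i) (hc : MonotoneOn c s)
    (hv : ∀ j ∈ s, ∑ i ∈ s with j ≤ i, v i ≤ 0) :
    ∑ i ∈ s, v i * c i ≤ 0 :=
  @sum_mul_nonpos_of_antitoneOn ιᵒᵈ _ v c s hc0 (fun _ ha _ hb hab => hc hb ha hab) hv

lemma path_le_path {a b a' b' t : ℝ} (ht : t ∈ Set.Icc (0:ℝ) 1) (ha : a ≤ a')
    (hb : b ≤ b') : a + t * (b - a) ≤ a' + t * (b' - a') := by
  nlinarith [mul_le_mul_of_nonneg_left hb ht.1, mul_le_mul_of_nonneg_left ha (sub_nonneg.2 ht.2)]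

lemma path_pos {a b t : ℝ} (ha : 0 < a) (hb : 0 < b) (ht : t ∈ Set.Icc (0:ℝ) 1) :
    0 < a + t * (b - a) := by
  nlinarith [mul_nonneg ht.1 hb.le, mul_nonneg (sub_nonneg.2 ht.2) ha.le]

lemma sum_sub_mul_nonpos_of_weakSupermajorized {n : ℕ} {θ δ c : Fin n → ℝ}
    (horder : (EPlus θ ∧ EPlus δ ∧ (∀ k ≤ n, psum θ k ≤ psum δ k)) ∨
      (DPlus θ ∧ DPlus δ ∧ (∀ k ≤ n, ssum θ k ≤ ssum δ k)))
    {t : ℝ} (ht : t ∈ Set.Icc (0:ℝ) 1) (hc0 : ∀ i, 0 ≤ c i)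
    (hc : ∀ i j, δ i + t * (θ i - δ i) ≤ δ j + t * (θ j - δ j) → c j ≤ c i) :
    ∑ i, (θ i - δ i) * c i ≤ 0 := by
  rcases horder with ⟨⟨_, hθ⟩, ⟨_, hδ⟩, hps⟩ | ⟨⟨_, hθ⟩, ⟨_, hδ⟩, hss⟩
  · refine univ.sum_mul_nonpos_of_antitoneOn (fun i _ => hc0 i)
      (fun i _ j _ hij => hc i j (path_le_path ht (hδ hij) (hθ hij))) fun j _ => ?_
    have hIic : ∑ i ∈ univ with i ≤ j, (θ i - δ i) = psum θ (j + 1) - psum δ (j + 1) := by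
      rw [psum, psum, ← sum_sub_distrib]
      refine sum_congr ?_ fun _ _ => rfl
      ext i; simp only [mem_filter, mem_univ, true_and]; omega
    linarith [hps (j + 1) j.isLt]
  · refine univ.sum_mul_nonpos_of_monotoneOn (fun i _ => hc0 i)
      (fun i _ j _ hij => hc j i (path_le_path ht (hδ hij) (hθ hij))) fun j _ => ?_
    have hIci : ∑ i ∈ univ with j ≤ i, (θ i - δ i) = ssum θ (n - j) - ssum δ (n - j) := by
      rw [ssum, ssum, ← sum_sub_distrib]
      refine sum_congr ?_ fun _ _ => rfl
      ext i; simp only [mem_filter, mem_univ, true_and]; omega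
    linarith [hss (n - j) (Nat.sub_le n j)]

lemma le_of_hasDerivAt_nonneg_off_finite {f : ℝ → ℝ} {a b : ℝ} {S : Set ℝ} (hS : S.Finite)
    (hab : a ≤ b) (hf : ContinuousOn f (Set.Icc a b))
    (hf' : ∀ t ∈ Set.Ioo a b \ S, ∃ d, 0 ≤ d ∧ HasDerivAt f d t) :
    f a ≤ f b := by
  induction S, hS using Set.Finite.induction_on generalizing a b with
  | empty =>
    have hf' : ∀ t ∈ Set.Ioo a b, ∃ d, 0 ≤ d ∧ HasDerivAt f d t := fun t ht =>
      hf' t ⟨ht, Set.notMem_empty t⟩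
    refine monotoneOn_of_deriv_nonneg (convex_Icc a b) hf (fun t ht => ?_) (fun t ht => ?_)
      (Set.left_mem_Icc.2 hab) (Set.right_mem_Icc.2 hab) hab
    · rw [interior_Icc] at ht
      obtain ⟨d, -, hd⟩ := hf' t ht
      exact hd.differentiableAt.differentiableWithinAt
    · rw [interior_Icc] at ht
      obtain ⟨d, hd0, hd⟩ := hf' t ht
      exact hd.deriv ▸ hd0
  | @insert s S _ _ ih =>
    by_cases hs : s ∈ Set.Ioo a b
    · refine (ih hs.1.le (hf.mono (Set.Icc_subset_Icc le_rfl hs.2.le)) fun t ht => ?_).trans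
        (ih hs.2.le (hf.mono (Set.Icc_subset_Icc hs.1.le le_rfl)) fun t ht => ?_)
      · refine hf' t ⟨⟨ht.1.1, ht.1.2.trans hs.2⟩, ?_⟩
        rintro (rfl | h)
        exacts [ht.1.2.false, ht.2 h]
      · refine hf' t ⟨⟨hs.1.trans ht.1.1, ht.1.2⟩, ?_⟩
        rintro (rfl | h)
        exacts [ht.1.1.false, ht.2 h]
    · refine ih hab hf fun t ht => hf' t ⟨ht.1, ?_⟩
      rintro (rfl | h)
      exacts [hs ht.1, ht.2 h]

lemma Set.subsingleton_setOf_eq_zero_frequently_ne {g : ℝ → ℝ} {a b : ℝ}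
    (hg0 : ∀ t ∈ Set.Ioo a b, 0 ≤ g t)
    (hg : MonotoneOn g (Set.Ioo a b) ∨ AntitoneOn g (Set.Ioo a b)) :
    {t ∈ Set.Ioo a b | g t = 0 ∧ ∃ᶠ s in 𝓝 t, g s ≠ 0}.Subsingleton := by
  intro t₁ h₁ t₂ h₂
  by_contra hne
  wlog hlt : t₁ < t₂ generalizing t₁ t₂
  · exact this h₂ h₁ (Ne.symm hne) ((Ne.symm hne).lt_of_le (not_lt.1 hlt))
  rcases hg with hg | hg
  · refine h₁.2.2 ?_
    filter_upwards [Ioo_mem_nhds h₁.1.1 hlt] with s hs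
    have hs' : s ∈ Set.Ioo a b := ⟨hs.1, hs.2.trans h₂.1.2⟩
    exact not_not.2 <| le_antisymm (h₂.2.1 ▸ hg hs' h₂.1 hs.2.le) (hg0 s hs')
  · refine h₂.2.2 ?_
    filter_upwards [Ioo_mem_nhds hlt h₂.1.2] with s hs
    have hs' : s ∈ Set.Ioo a b := ⟨h₁.1.1.trans hs.1, hs.2⟩
    exact not_not.2 <| le_antisymm (h₁.2.1 ▸ hg h₁.1 hs' hs.1.le) (hg0 s hs')

lemma HasDerivAt.rpow_const_of_eventually_zero {g : ℝ → ℝ} {g' t α : ℝ}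
    (hg : HasDerivAt g g' t) (hα : 0 < α) (hzero : g t = 0 → ∀ᶠ s in 𝓝 t, g s = 0) :
    HasDerivAt (fun s => g s ^ α) (g t ^ α * (α * g' / g t)) t := by
  by_cases h : g t = 0
  · rw [h, Real.zero_rpow hα.ne', zero_mul]
    refine (hasDerivAt_const t (0:ℝ)).congr_of_eventuallyEq ?_
    filter_upwards [hzero h] with s hs
    rw [hs, Real.zero_rpow hα.ne']
  · convert hg.rpow_const (p := α) (Or.inl h) using 1
    rw [Real.rpow_sub_one h]
    field_simp

lemma hasDerivAt_finset_prod_of_hasDerivAt_mul {ι : Type*} [DecidableEq ι] {f : ι → ℝ → ℝ}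
    {ρ : ι → ℝ} {t : ℝ}
    (s : Finset ι) (hf : ∀ k ∈ s, HasDerivAt (f k) (f k t * ρ k) t) :
    HasDerivAt (fun x => ∏ k ∈ s, f k x) ((∏ k ∈ s, f k t) * ∑ k ∈ s, ρ k) t := by
  refine (HasDerivAt.fun_finsetProd hf).congr_deriv ?_
  rw [mul_sum]
  refine sum_congr rfl fun k hk => ?_
  rw [smul_eq_mul, ← mul_assoc, prod_erase_mul s _ hk]

section SecondMax

variable {ι : Type*} [Fintype ι] [DecidableEq ι]

noncomputable def secondMaxPoly (u : ι → ℝ) : ℝ :=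
  ∑ l, ∏ k ∈ univ.erase l, u k - ((Fintype.card ι : ℝ) - 1) * ∏ k, u k

noncomputable def secondMaxWeight (u : ι → ℝ) (k : ι) : ℝ :=
  ∑ l ∈ univ.erase k, (1 - u l) * ∏ j ∈ univ.erase l, u j

lemma secondMaxCDF_eq_secondMaxPoly (n : ℕ) (F : Fin n → ℝ → ℝ) (x : ℝ) :
    secondMaxCDF n F x = secondMaxPoly fun k => F k x := by
  rw [secondMaxCDF, secondMaxPoly, Fintype.card_fin]

lemma secondMaxWeight_eq (u : ι → ℝ) (k : ι) :
    secondMaxWeight u k =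
      ∑ l ∈ univ.erase k, ∏ j ∈ univ.erase l, u j - ((Fintype.card ι : ℝ) - 1) * ∏ j, u j := by
  have hP (l : ι) :
      (1 - u l) * ∏ j ∈ univ.erase l, u j = ∏ j ∈ univ.erase l, u j - ∏ j, u j := by
    rw [sub_mul, one_mul, mul_prod_erase _ _ (mem_univ l)]
  rw [secondMaxWeight, sum_congr rfl fun l _ => hP l, sum_sub_distrib, sum_const,
    card_erase_of_mem (mem_univ k), card_univ, nsmul_eq_mul,
    Nat.cast_sub (Fintype.card_pos_iff.2 ⟨k⟩), Nat.cast_one]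

lemma secondMaxWeight_nonneg {u : ι → ℝ} (h0 : ∀ i, 0 ≤ u i) (h1 : ∀ i, u i ≤ 1)
    (k : ι) : 0 ≤ secondMaxWeight u k :=
  sum_nonneg fun l _ => mul_nonneg (sub_nonneg.2 (h1 l)) (prod_nonneg fun j _ => h0 j)

lemma prod_erase_le_prod_erase {u : ι → ℝ} (h0 : ∀ i, 0 ≤ u i) {i j : ι}
    (h : u j ≤ u i) : ∏ m ∈ univ.erase i, u m ≤ ∏ m ∈ univ.erase j, u m := by
  rcases eq_or_ne i j with rfl | hij
  · rfl
  rw [← mul_prod_erase (univ.erase i) u (mem_erase.2 ⟨hij.symm, mem_univ j⟩),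
    ← mul_prod_erase (univ.erase j) u (mem_erase.2 ⟨hij, mem_univ i⟩), erase_right_comm]
  exact mul_le_mul_of_nonneg_right h (prod_nonneg fun m _ => h0 m)

lemma secondMaxWeight_le_of_le {u : ι → ℝ} (h0 : ∀ i, 0 ≤ u i) {i j : ι}
    (h : u j ≤ u i) : secondMaxWeight u j ≤ secondMaxWeight u i := by
  rw [secondMaxWeight_eq, secondMaxWeight_eq, sum_erase_eq_sub (mem_univ _),
    sum_erase_eq_sub (mem_univ _)]
  linarith [prod_erase_le_prod_erase h0 h]

lemma hasDerivAt_secondMaxPoly {u : ι → ℝ → ℝ} {ρ : ι → ℝ} {t : ℝ}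
    (hu : ∀ k, HasDerivAt (u k) (u k t * ρ k) t) :
    HasDerivAt (fun s => secondMaxPoly fun k => u k s)
      (∑ k, ρ k * secondMaxWeight (fun k => u k t) k) t := by
  have hQ (l : ι) := hasDerivAt_finset_prod_of_hasDerivAt_mul (univ.erase l) fun k _ => hu k
  have hP := hasDerivAt_finset_prod_of_hasDerivAt_mul univ fun k _ => hu k
  refine ((HasDerivAt.fun_sum fun l _ => hQ l).sub (hP.const_mul _)).congr_deriv ?_
  simp only [secondMaxWeight_eq, sum_erase_eq_sub (mem_univ _), mul_sub, sum_sub_distrib,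
    ← sum_mul]
  simp only [mul_comm (ρ _)]
  ring

lemma continuousOn_secondMaxPoly {u : ι → ℝ → ℝ} {s : Set ℝ}
    (hu : ∀ k, ContinuousOn (u k) s) : ContinuousOn (fun t => secondMaxPoly fun k => u k t) s := by
  unfold secondMaxPoly
  fun_prop

end SecondMax

section ELS

variable {Fb fb : ℝ → ℝ} {lam α x : ℝ}

/-- The logarithmic derivative of `th ↦ F_b(c / th)^α` is `-(α / c) * scaleRate Fb fb c th`. -/
noncomputable def scaleRate (Fb fb : ℝ → ℝ) (c th : ℝ) : ℝ :=
  (c / th) ^ 2 * rtilde Fb fb (c / th)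

lemma scaleRate_nonneg (hFb_range : ∀ x, Fb x ∈ Set.Icc (0:ℝ) 1) (hfb_nonneg : ∀ x, 0 ≤ fb x)
    (c th : ℝ) : 0 ≤ scaleRate Fb fb c th :=
  mul_nonneg (sq_nonneg _) (div_nonneg (hfb_nonneg _) (hFb_range _).1)

lemma elsCDF_nonneg (hFb_range : ∀ x, Fb x ∈ Set.Icc (0:ℝ) 1) (th : ℝ) :
    0 ≤ elsCDF Fb lam th α x :=
  Real.rpow_nonneg (hFb_range _).1 α

lemma elsCDF_le_one (hFb_range : ∀ x, Fb x ∈ Set.Icc (0:ℝ) 1) (hα : 0 < α) (th : ℝ) :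
    elsCDF Fb lam th α x ≤ 1 :=
  Real.rpow_le_one (hFb_range _).1 (hFb_range _).2 hα.le

lemma monotoneOn_or_antitoneOn_path (hFb_mono : Monotone Fb) {c a b : ℝ} (hc : 0 ≤ c)
    (ha : 0 < a) (hb : 0 < b) :
    MonotoneOn (fun t => Fb (c / (a + t * (b - a)))) (Set.Ioo 0 1) ∨
      AntitoneOn (fun t => Fb (c / (a + t * (b - a)))) (Set.Ioo 0 1) := by
  have hpos {t : ℝ} (ht : t ∈ Set.Ioo (0:ℝ) 1) := path_pos ha hb (Set.Ioo_subset_Icc_self ht)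
  rcases le_total a b with hab | hab
  · refine Or.inr fun s hs t ht hst => hFb_mono (div_le_div_of_nonneg_left hc (hpos hs) ?_)
    nlinarith
  · refine Or.inl fun s hs t ht hst => hFb_mono (div_le_div_of_nonneg_left hc (hpos ht) ?_)
    nlinarith

lemma hasDerivAt_elsCDF_path (hFb_deriv : ∀ x, HasDerivAt Fb (fb x) x) (hα : 0 < α)
    {d e t : ℝ} (hη : 0 < d + t * (e - d))
    (hzero : Fb ((x - lam) / (d + t * (e - d))) = 0 →
      ∀ᶠ s in 𝓝 t, Fb ((x - lam) / (d + s * (e - d))) = 0) :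
    HasDerivAt (fun s => elsCDF Fb lam (d + s * (e - d)) α x)
      (elsCDF Fb lam (d + t * (e - d)) α x *
        (-(α / (x - lam)) * ((e - d) * scaleRate Fb fb (x - lam) (d + t * (e - d))))) t := by
  have hpath : HasDerivAt (fun s => d + s * (e - d)) (e - d) t := by
    simpa using ((hasDerivAt_id t).mul_const (e - d)).const_add d
  have hg := (hFb_deriv _).comp t ((hasDerivAt_const t (x - lam)).div hpath hη.ne')
  refine (hg.rpow_const_of_eventually_zero hα hzero).congr_deriv ?_
  simp only [elsCDF, scaleRate, rtilde, Function.comp_apply, Pi.div_apply]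
  congr 1
  by_cases hc : x - lam = 0
  · simp [hc]
  field_simp
  ring

lemma scaleRate_mul_secondMaxWeight_le {ι : Type*} [Fintype ι] [DecidableEq ι]
    (hFb_mono : Monotone Fb) (hFb_range : ∀ x, Fb x ∈ Set.Icc (0:ℝ) 1)
    (hfb_nonneg : ∀ x, 0 ≤ fb x) (hα : 0 < α) (hx : lam < x)
    (hinc : MonotoneOn (fun w => w ^ 2 * rtilde Fb fb w) (Set.Ioi 0))
    {η : ι → ℝ} {i j : ι} (hi : 0 < η i) (hj : 0 < η j) (hij : η i ≤ η j) :
    scaleRate Fb fb (x - lam) (η j) * secondMaxWeight (fun k => elsCDF Fb lam (η k) α x) j ≤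
      scaleRate Fb fb (x - lam) (η i) * secondMaxWeight (fun k => elsCDF Fb lam (η k) α x) i := by
  have hc : 0 < x - lam := sub_pos.2 hx
  have hw : (x - lam) / η j ≤ (x - lam) / η i := div_le_div_of_nonneg_left hc.le hi hij
  have hψ : scaleRate Fb fb (x - lam) (η j) ≤ scaleRate Fb fb (x - lam) (η i) :=
    hinc (div_pos hc hj) (div_pos hc hi) hw
  have hu : elsCDF Fb lam (η j) α x ≤ elsCDF Fb lam (η i) α x :=
    Real.rpow_le_rpow (hFb_range _).1 (hFb_mono hw) hα.le
  have hu0 (k : ι) := elsCDF_nonneg (lam := lam) (α := α) (x := x) hFb_range (η k)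
  exact mul_le_mul hψ (secondMaxWeight_le_of_le hu0 hu)
    (secondMaxWeight_nonneg hu0 (fun k => elsCDF_le_one hFb_range hα _) j)
    (scaleRate_nonneg hFb_range hfb_nonneg _ _)

lemma continuousOn_elsCDF_path (hFb : Continuous Fb) (hα : 0 < α) {d e : ℝ} (hd : 0 < d)
    (he : 0 < e) : ContinuousOn (fun t => elsCDF Fb lam (d + t * (e - d)) α x) (Set.Icc 0 1) :=
   ContinuousOn.rpow_const (hFb.comp_continuousOn (continuousOn_const.div (by fun_prop)
    fun t ht => (path_pos hd he ht).ne')) fun _ _ => Or.inr hα.le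

end ELS

lemma secondMaxCDF_path_deriv_nonneg {n : ℕ} {Fb fb : ℝ → ℝ} (hFb_mono : Monotone Fb)
    (hFb_range : ∀ x, Fb x ∈ Set.Icc (0:ℝ) 1) (hfb_nonneg : ∀ x, 0 ≤ fb x)
    {lam α x : ℝ} (hα : 0 < α) (hx : lam < x) {θ δ : Fin n → ℝ}
    (horder : (EPlus θ ∧ EPlus δ ∧ (∀ k ≤ n, psum θ k ≤ psum δ k)) ∨
      (DPlus θ ∧ DPlus δ ∧ (∀ k ≤ n, ssum θ k ≤ ssum δ k)))
    (hinc : MonotoneOn (fun w => w ^ 2 * rtilde Fb fb w) (Set.Ioi 0))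
    {t : ℝ} (ht : t ∈ Set.Icc (0:ℝ) 1) (hη : ∀ k, 0 < δ k + t * (θ k - δ k)) :
    0 ≤ ∑ k, -(α / (x - lam)) * ((θ k - δ k) * scaleRate Fb fb (x - lam) (δ k + t * (θ k - δ k))) *
      secondMaxWeight (fun k => elsCDF Fb lam (δ k + t * (θ k - δ k)) α x) k := by
  simp only [mul_assoc, ← mul_sum]
  refine mul_nonneg_of_nonpos_of_nonpos (neg_nonpos.2 (div_nonneg hα.le (sub_pos.2 hx).le))
    (sum_sub_mul_nonpos_of_weakSupermajorized horder ht (fun k => ?_) fun i j hij => ?_)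
  · exact mul_nonneg (scaleRate_nonneg hFb_range hfb_nonneg _ _)
      (secondMaxWeight_nonneg (fun k => elsCDF_nonneg hFb_range _)
        (fun k => elsCDF_le_one hFb_range hα _) k)
  · exact scaleRate_mul_secondMaxWeight_le (η := fun k => δ k + t * (θ k - δ k))
      hFb_mono hFb_range hfb_nonneg hα hx hinc (hη i) (hη j) hij

theorem second_largest_st_scale_weak_supermajorization_general
    (n : ℕ)
    (Fb fb : ℝ → ℝ)
    (hFb_mono : Monotone Fb)
    (hFb_range : ∀ x, Fb x ∈ Set.Icc (0:ℝ) 1)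
    (hFb_deriv : ∀ x, HasDerivAt Fb (fb x) x)
    (hfb_nonneg : ∀ x, 0 ≤ fb x)
    (lam α : ℝ) (hα : 0 < α)
    (θ δ : Fin n → ℝ)
    (horder : (EPlus θ ∧ EPlus δ ∧ (∀ k ≤ n, psum θ k ≤ psum δ k)) ∨ (DPlus θ ∧ DPlus δ ∧ (∀ k ≤ n, ssum θ k ≤ ssum δ k)))
    (hinc : MonotoneOn (fun w => w ^ 2 * rtilde Fb fb w) (Set.Ioi 0)) :
    ∀ x, lam < x →
      secondMaxCDF n (fun i => elsCDF Fb lam (δ i) α) x ≤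
        secondMaxCDF n (fun i => elsCDF Fb lam (θ i) α) x := by
  intro x hx
  have hθ : ∀ i, 0 < θ i := by rcases horder with ⟨⟨h, _⟩, _⟩ | ⟨⟨h, _⟩, _⟩ <;> exact h
  have hδ : ∀ i, 0 < δ i := by rcases horder with ⟨_, ⟨h, _⟩, _⟩ | ⟨_, ⟨h, _⟩, _⟩ <;> exact h
  have hFb : Continuous Fb := continuous_iff_continuousAt.2 fun w => (hFb_deriv w).continuousAt
  have hη (k : Fin n) {t : ℝ} (ht : t ∈ Set.Icc (0:ℝ) 1) : 0 < δ k + t * (θ k - δ k) :=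
    path_pos (hδ k) (hθ k) ht
  set g : Fin n → ℝ → ℝ := fun k t => Fb ((x - lam) / (δ k + t * (θ k - δ k)))
  set bad : Set ℝ := ⋃ k, {t ∈ Set.Ioo 0 1 | g k t = 0 ∧ ∃ᶠ s in 𝓝 t, g k s ≠ 0}
  have hbad : bad.Finite := Set.finite_iUnion fun k =>
    (Set.subsingleton_setOf_eq_zero_frequently_ne (fun t _ => (hFb_range _).1)
      (monotoneOn_or_antitoneOn_path hFb_mono (sub_pos.2 hx).le (hδ k) (hθ k))).finite
  have hderiv : ∀ t ∈ Set.Ioo 0 1 \ bad, ∃ d, 0 ≤ d ∧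
      HasDerivAt (fun t => secondMaxPoly fun k => elsCDF Fb lam (δ k + t * (θ k - δ k)) α x)
        d t := by
    rintro t ⟨ht, hgood⟩
    have htI := Set.Ioo_subset_Icc_self ht
    refine ⟨_, secondMaxCDF_path_deriv_nonneg hFb_mono hFb_range hfb_nonneg hα hx horder hinc htI
      fun k => hη k htI, hasDerivAt_secondMaxPoly fun k =>
        hasDerivAt_elsCDF_path hFb_deriv hα (hη k htI) fun h0 => ?_⟩
    have hfreq : ¬∃ᶠ s in 𝓝 t, g k s ≠ 0 := fun h => hgood (Set.mem_iUnion.2 ⟨k, ht, h0, h⟩)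
    simpa only [not_frequently, not_not] using hfreq
  simpa only [secondMaxCDF_eq_secondMaxPoly, zero_mul, add_zero, one_mul, add_sub_cancel] using
    le_of_hasDerivAt_nonneg_off_finite hbad zero_le_one
      (continuousOn_secondMaxPoly fun k => continuousOn_elsCDF_path hFb hα (hδ k) (hθ k)) hderiv

theorem second_largest_st_scale_weak_supermajorization
    (n : ℕ) (hn : 2 ≤ n)
    (Fb fb : ℝ → ℝ)
    (hFb_mono : Monotone Fb)
    (hFb_range : ∀ x, Fb x ∈ Set.Icc (0:ℝ) 1)
    (hFb_deriv : ∀ x, HasDerivAt Fb (fb x) x)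
    (hfb_nonneg : ∀ x, 0 ≤ fb x)
    (lam α : ℝ) (hlam : 0 < lam) (hα : 0 < α)
    (θ δ : Fin n → ℝ)
    (horder : (EPlus θ ∧ EPlus δ ∧ (∀ k ≤ n, psum θ k ≤ psum δ k)) ∨ (DPlus θ ∧ DPlus δ ∧ (∀ k ≤ n, ssum θ k ≤ ssum δ k)))
    (hinc : MonotoneOn (fun w => w ^ 2 * rtilde Fb fb w) (Set.Ioi 0)) :
    ∀ x, lam < x →
      secondMaxCDF n (fun i => elsCDF Fb lam (δ i) α) x ≤
        secondMaxCDF n (fun i => elsCDF Fb lam (θ i) α) x :=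
  second_largest_st_scale_weak_supermajorization_general n Fb fb hFb_mono hFb_range hFb_deriv
    hfb_nonneg lam α hα θ δ horder hinc
end

section
/- Let X_1,…,X_n be independent with X ~ ELS(λ1_n, θ1_n, α; F_b) and Y_1,…,Y_n independent with Y ~ ELS(λ1_n, θ1_n, β; F_b), i.e. both samples share the same scalar location λ and scalar scale θ > 0, with shape vectors α = (α_1,…,α_n) and β = (β_1,…,β_n). Assume α, β both lie in E_+ (or both in D_+). If α ⪰^w β (β is weakly supermajorized by α), then X_{n−1:n} ≤_st Y_{n−1:n}. -/
open Finset

/-! With `t = F_b ((x - λ) / θ)` and `c = log t ≤ 0`, the CDF of `X_{n-1:n}` at `x` is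
`H γ = ∑ₗ exp (c (∑ γ - γₗ)) - (n - 1) exp (c ∑ γ)` in the shape vector `γ` (when `t = 0` both CDFs
vanish). Along the segment `γ_s = β + s (α - β)`, which stays in `E₊` (resp. `D₊`), the derivative of
`H γ_s` is `c ∑ⱼ (αⱼ - βⱼ) wⱼ`, where `wⱼ ≥ 0` is ordered oppositely to `γ_s`. Abel summation against
the nonpositive partial sums of `α - β` gives `∑ⱼ (αⱼ - βⱼ) wⱼ ≤ 0`, so `H` increases from `β` to `α`. -/

open Real

theorem psum_comp_castSucc {n : ℕ} (d : Fin (n + 1) → ℝ) {k : ℕ} (hk : k ≤ n) :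
    psum (d ∘ Fin.castSucc) k = psum d k := by
  simp only [psum, Finset.sum_filter, Fin.sum_univ_castSucc, Function.comp_apply,
    Fin.val_castSucc, Fin.val_last, if_neg hk.not_gt, add_zero]

theorem psum_eq_sum {n : ℕ} (d : Fin n → ℝ) : psum d n = ∑ i, d i := by
  simp [psum]

theorem psum_sub {n : ℕ} (α β : Fin n → ℝ) (k : ℕ) :
    psum (fun i => α i - β i) k = psum α k - psum β k :=
  Finset.sum_sub_distrib _ _

theorem ssum_sub {n : ℕ} (α β : Fin n → ℝ) (k : ℕ) :
    ssum (fun i => α i - β i) k = ssum α k - ssum β k :=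
  Finset.sum_sub_distrib _ _

theorem ssum_eq_psum_comp_rev {n : ℕ} (d : Fin n → ℝ) (k : ℕ) :
    ssum d k = psum (d ∘ Fin.rev) k := by
  simp only [ssum, psum, Finset.sum_filter]
  rw [← Equiv.sum_comp Fin.revPerm]
  refine Finset.sum_congr rfl fun i _ => ?_
  have := i.isLt
  simp only [Fin.revPerm_apply, Function.comp_apply, Fin.val_rev]
  exact if_congr (by omega) rfl rfl

theorem sum_mul_nonpos_of_antitone_of_psum_nonpos :
    ∀ {n : ℕ} {d w : Fin n → ℝ}, Antitone w → (∀ i, 0 ≤ w i) → (∀ k ≤ n, psum d k ≤ 0) →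
      ∑ i, d i * w i ≤ 0
  | 0, _, _, _, _, _ => by simp
  | n + 1, d, w, hw, hw0, hd => by
    have hrest : ∑ i : Fin n, d i.castSucc * (w i.castSucc - w (Fin.last n)) ≤ 0 :=
      sum_mul_nonpos_of_antitone_of_psum_nonpos
        (fun i j hij => sub_le_sub_right (hw (Fin.castSucc_le_castSucc_iff.mpr hij)) _)
        (fun i => sub_nonneg.mpr (hw (Fin.le_last _)))
        (fun k hk => (psum_comp_castSucc d hk).trans_le (hd k (by omega)))
    have htotal : (∑ i, d i) * w (Fin.last n) ≤ 0 :=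
      mul_nonpos_of_nonpos_of_nonneg ((psum_eq_sum d).symm.trans_le (hd _ le_rfl)) (hw0 _)
    calc ∑ i, d i * w i
        = ∑ i : Fin n, d i.castSucc * (w i.castSucc - w (Fin.last n))
          + (∑ i, d i) * w (Fin.last n) := by
          simp only [Fin.sum_univ_castSucc, mul_sub, Finset.sum_sub_distrib, add_mul,
            Finset.sum_mul]
          ring
      _ ≤ 0 := add_nonpos hrest htotal

theorem sum_mul_nonpos_of_monotone_of_ssum_nonpos {n : ℕ} {d w : Fin n → ℝ} (hw : Monotone w)
    (hw0 : ∀ i, 0 ≤ w i) (hd : ∀ k ≤ n, ssum d k ≤ 0) : ∑ i, d i * w i ≤ 0 := by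
  rw [← Equiv.sum_comp Fin.revPerm]
  exact sum_mul_nonpos_of_antitone_of_psum_nonpos (hw.comp_antitone Fin.rev_anti)
    (fun i => hw0 _) (fun k hk => (ssum_eq_psum_comp_rev d k).symm.trans_le (hd k hk))

noncomputable def expSecondMax {n : ℕ} (c : ℝ) (γ : Fin n → ℝ) : ℝ :=
  ∑ l, exp (c * (∑ k, γ k - γ l)) - ((n : ℝ) - 1) * exp (c * ∑ k, γ k)

theorem secondMaxCDF_eq_expSecondMax {n : ℕ} {F : Fin n → ℝ → ℝ} {a : Fin n → ℝ} {t x : ℝ}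
    (ht : 0 < t) (hF : ∀ i, F i x = t ^ a i) : secondMaxCDF n F x = expSecondMax (log t) a := by
  simp only [secondMaxCDF, expSecondMax, hF, rpow_def_of_pos ht, ← exp_sum, ← Finset.mul_sum,
    Finset.sum_erase_eq_sub (mem_univ _), mul_sub]

/-- `c * expSecondMaxSlope c γ j` is the partial derivative of `expSecondMax c` in `γ j`. -/
noncomputable def expSecondMaxSlope {n : ℕ} (c : ℝ) (γ : Fin n → ℝ) (j : Fin n) : ℝ :=
  ∑ l ∈ univ.erase j, (exp (c * (∑ k, γ k - γ l)) - exp (c * ∑ k, γ k))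

section expSecondMax

variable {n : ℕ} {c : ℝ} {γ : Fin n → ℝ}

theorem expSecondMaxSlope_eq (c : ℝ) (γ : Fin n → ℝ) (j : Fin n) :
    expSecondMaxSlope c γ j = ∑ l, exp (c * (∑ k, γ k - γ l)) - exp (c * (∑ k, γ k - γ j))
      - ((n : ℝ) - 1) * exp (c * ∑ k, γ k) := by
  have : 1 ≤ n := Nat.one_le_of_lt j.isLt
  rw [expSecondMaxSlope, Finset.sum_erase_eq_sub (mem_univ j), Finset.sum_sub_distrib,
    Finset.sum_const, card_univ, Fintype.card_fin, nsmul_eq_mul]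
  ring

theorem expSecondMaxSlope_nonneg (hc : c ≤ 0) (hγ : ∀ i, 0 ≤ γ i) (j : Fin n) :
    0 ≤ expSecondMaxSlope c γ j :=
  Finset.sum_nonneg fun l _ => sub_nonneg.mpr <| exp_le_exp.mpr <| by
    nlinarith [mul_nonpos_of_nonpos_of_nonneg hc (hγ l)]

theorem expSecondMaxSlope_le_of_le (hc : c ≤ 0) {i j : Fin n} (h : γ i ≤ γ j) :
    expSecondMaxSlope c γ j ≤ expSecondMaxSlope c γ i := by
  rw [expSecondMaxSlope_eq, expSecondMaxSlope_eq]
  have : exp (c * (∑ k, γ k - γ i)) ≤ exp (c * (∑ k, γ k - γ j)) :=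
    exp_le_exp.mpr (by nlinarith)
  linarith

theorem hasDerivAt_expSecondMax_segment (c : ℝ) (α β : Fin n → ℝ) (s : ℝ) :
    HasDerivAt (fun s => expSecondMax c fun i => β i + s * (α i - β i))
      (c * ∑ j, (α j - β j) * expSecondMaxSlope c (fun i => β i + s * (α i - β i)) j) s := by
  have hγ : ∀ k, HasDerivAt (fun s => β k + s * (α k - β k)) (α k - β k) s := fun k => by
    simpa using ((hasDerivAt_id s).mul_const (α k - β k)).const_add (β k)
  have hS := HasDerivAt.fun_sum fun k (_ : k ∈ univ) => hγ k
  have regroup : ∀ (d e : Fin n → ℝ) (E : ℝ),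
      ∑ l, e l * (c * (∑ k, d k - d l)) - ((n : ℝ) - 1) * (E * (c * ∑ k, d k)) =
        c * ∑ j, d j * (∑ l, e l - e j - ((n : ℝ) - 1) * E) := fun d e E => by
    have h1 : ∑ l, e l * (c * (∑ k, d k - d l)) =
        c * (∑ k, d k) * ∑ l, e l - c * ∑ l, d l * e l := by
      rw [Finset.mul_sum _ e, Finset.mul_sum _ (fun l => d l * e l), ← Finset.sum_sub_distrib]
      exact Finset.sum_congr rfl fun l _ => by ring
    have h2 : ∑ j, d j * (∑ l, e l - e j - ((n : ℝ) - 1) * E) =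
        (∑ j, d j) * ∑ l, e l - ∑ j, d j * e j - ((n : ℝ) - 1) * E * ∑ j, d j := by
      rw [Finset.sum_mul _ d, Finset.mul_sum _ d, ← Finset.sum_sub_distrib,
        ← Finset.sum_sub_distrib]
      exact Finset.sum_congr rfl fun j _ => by ring
    rw [h1, h2]
    ring
  refine ((HasDerivAt.fun_sum fun l (_ : l ∈ univ) =>
    ((hS.fun_sub (hγ l)).const_mul c).exp).fun_sub
    ((hS.const_mul c).exp.const_mul ((n : ℝ) - 1))).congr_deriv ?_
  simp only [expSecondMaxSlope_eq]
  exact regroup (fun i => α i - β i)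
    (fun l => exp (c * (∑ i, (β i + s * (α i - β i)) - (β l + s * (α l - β l))))) _

theorem expSecondMax_le_of_slope (hc : c ≤ 0) {α β : Fin n → ℝ}
    (h : ∀ s ∈ Set.Icc (0 : ℝ) 1,
      ∑ j, (α j - β j) * expSecondMaxSlope c (fun i => β i + s * (α i - β i)) j ≤ 0) :
    expSecondMax c β ≤ expSecondMax c α := by
  have hmono : MonotoneOn (fun s => expSecondMax c fun i => β i + s * (α i - β i))
      (Set.Icc 0 1) :=
    monotoneOn_of_hasDerivWithinAt_nonneg (convex_Icc 0 1)
      (fun s _ => (hasDerivAt_expSecondMax_segment c α β s).continuousAt.continuousWithinAt)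
      (fun s _ => (hasDerivAt_expSecondMax_segment c α β s).hasDerivWithinAt)
      (fun s hs => mul_nonneg_of_nonpos_of_nonpos hc (h s (interior_subset hs)))
  simpa using hmono (Set.left_mem_Icc.mpr zero_le_one) (Set.right_mem_Icc.mpr zero_le_one)
    zero_le_one

end expSecondMax

section segment

variable {n : ℕ} {α β : Fin n → ℝ} {s : ℝ}

theorem EPlus.segment (hα : EPlus α) (hβ : EPlus β) (hs : s ∈ Set.Icc (0 : ℝ) 1) :
    EPlus fun i => β i + s * (α i - β i) := by
  obtain ⟨hs0, hs1⟩ := hs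
  refine ⟨fun i => ?_, fun i j hij => ?_⟩
  · rcases le_total (α i) (β i) with h | h <;> nlinarith [hα.1 i, hβ.1 i]
  · nlinarith [hα.2 hij, hβ.2 hij]

theorem DPlus.segment (hα : DPlus α) (hβ : DPlus β) (hs : s ∈ Set.Icc (0 : ℝ) 1) :
    DPlus fun i => β i + s * (α i - β i) := by
  obtain ⟨hs0, hs1⟩ := hs
  refine ⟨fun i => ?_, fun i j hij => ?_⟩
  · rcases le_total (α i) (β i) with h | h <;> nlinarith [hα.1 i, hβ.1 i]
  · nlinarith [hα.2 hij, hβ.2 hij]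

end segment

theorem expSecondMax_le_of_EPlus {n : ℕ} {c : ℝ} {α β : Fin n → ℝ} (hc : c ≤ 0)
    (hα : EPlus α) (hβ : EPlus β) (h : ∀ k ≤ n, psum α k ≤ psum β k) :
    expSecondMax c β ≤ expSecondMax c α := by
  refine expSecondMax_le_of_slope hc fun s hs => ?_
  have hγ := hα.segment hβ hs
  exact sum_mul_nonpos_of_antitone_of_psum_nonpos
    (fun i j hij => expSecondMaxSlope_le_of_le hc (hγ.2 hij))
    (expSecondMaxSlope_nonneg hc fun i => (hγ.1 i).le)
    (fun k hk => (psum_sub α β k).trans_le (sub_nonpos.mpr (h k hk)))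

theorem expSecondMax_le_of_DPlus {n : ℕ} {c : ℝ} {α β : Fin n → ℝ} (hc : c ≤ 0)
    (hα : DPlus α) (hβ : DPlus β) (h : ∀ k ≤ n, ssum α k ≤ ssum β k) :
    expSecondMax c β ≤ expSecondMax c α := by
  refine expSecondMax_le_of_slope hc fun s hs => ?_
  have hγ := hα.segment hβ hs
  exact sum_mul_nonpos_of_monotone_of_ssum_nonpos
    (fun i j hij => expSecondMaxSlope_le_of_le hc (hγ.2 hij))
    (expSecondMaxSlope_nonneg hc fun i => (hγ.1 i).le)
    (fun k hk => (ssum_sub α β k).trans_le (sub_nonpos.mpr (h k hk)))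

theorem secondMaxCDF_eq_zero {n : ℕ} (hn : 2 ≤ n) {F : Fin n → ℝ → ℝ} {x : ℝ}
    (hF : ∀ k, F k x = 0) : secondMaxCDF n F x = 0 := by
  have hprod : ∀ l : Fin n, ∏ k ∈ univ.erase l, F k x = 0 := fun l => by
    obtain ⟨j, hj⟩ := Fintype.exists_ne_of_one_lt_card (by simp; omega) l
    exact Finset.prod_eq_zero (Finset.mem_erase.mpr ⟨hj, mem_univ j⟩) (hF j)
  have hall : ∏ k, F k x = 0 := Finset.prod_eq_zero (mem_univ ⟨0, by omega⟩) (hF _)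
  simp [secondMaxCDF, hprod, hall]

theorem second_largest_st_shape_weak_supermajorization_general
    (n : ℕ) (hn : 2 ≤ n)
    (Fb : ℝ → ℝ)
    (hFb_range : ∀ x, Fb x ∈ Set.Icc (0:ℝ) 1)
    (lam θ : ℝ)
    (α β : Fin n → ℝ)
    (horder : (EPlus α ∧ EPlus β ∧ (∀ k ≤ n, psum α k ≤ psum β k)) ∨ (DPlus α ∧ DPlus β ∧ (∀ k ≤ n, ssum α k ≤ ssum β k))) :
    ∀ x, lam < x →
      secondMaxCDF n (fun i => elsCDF Fb lam θ (β i)) x ≤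
        secondMaxCDF n (fun i => elsCDF Fb lam θ (α i)) x := by
  intro x _
  obtain ⟨ht0, ht1⟩ := hFb_range ((x - lam) / θ)
  rcases ht0.eq_or_lt with ht | ht
  · have hzero : ∀ a : Fin n → ℝ, (∀ i, 0 < a i) →
        secondMaxCDF n (fun i => elsCDF Fb lam θ (a i)) x = 0 := fun a ha =>
      secondMaxCDF_eq_zero hn fun i => by simp [elsCDF, ← ht, zero_rpow (ha i).ne']
    rcases horder with ⟨hα, hβ, -⟩ | ⟨hα, hβ, -⟩ <;> rw [hzero α hα.1, hzero β hβ.1]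
  · have hexp : ∀ a : Fin n → ℝ, secondMaxCDF n (fun i => elsCDF Fb lam θ (a i)) x =
        expSecondMax (log (Fb ((x - lam) / θ))) a := fun a =>
      secondMaxCDF_eq_expSecondMax ht fun _ => rfl
    have hc := log_nonpos ht0 ht1
    rw [hexp, hexp]
    rcases horder with ⟨hα, hβ, h⟩ | ⟨hα, hβ, h⟩
    exacts [expSecondMax_le_of_EPlus hc hα hβ h, expSecondMax_le_of_DPlus hc hα hβ h]

theorem second_largest_st_shape_weak_supermajorization
    (n : ℕ) (hn : 2 ≤ n)
    (Fb fb : ℝ → ℝ)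
    (hFb_mono : Monotone Fb)
    (hFb_range : ∀ x, Fb x ∈ Set.Icc (0:ℝ) 1)
    (hFb_deriv : ∀ x, HasDerivAt Fb (fb x) x)
    (hfb_nonneg : ∀ x, 0 ≤ fb x)
    (lam θ : ℝ) (hlam : 0 < lam) (hθ : 0 < θ)
    (α β : Fin n → ℝ)
    (horder : (EPlus α ∧ EPlus β ∧ (∀ k ≤ n, psum α k ≤ psum β k)) ∨ (DPlus α ∧ DPlus β ∧ (∀ k ≤ n, ssum α k ≤ ssum β k))) :
    ∀ x, lam < x →
      secondMaxCDF n (fun i => elsCDF Fb lam θ (β i)) x ≤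
        secondMaxCDF n (fun i => elsCDF Fb lam θ (α i)) x :=
  second_largest_st_shape_weak_supermajorization_general n hn Fb hFb_range lam θ α β horder
end

section
/- Let a_1, a_2 ∈ (0,1] and consider the Gumbel generators ψ_1(x) = exp((1 − e^x)/a_1) and ψ_2(x) = exp((1 − e^x)/a_2) for x ≥ 0, with φ_2 = ψ_2^{−1}, so that (φ_2∘ψ_1)(x) = log(1 − (a_2/a_1)(1 − e^x)). Then: (i) if a_1 ≥ a_2, the function φ_2∘ψ_1 is super-additive on [0,∞) (its second derivative a_2(a_1−a_2)e^x/(a_1 − a_2(1−e^x))² is nonnegative, so it is convex with value 0 at 0); and (ii) if a_1 ≤ a_2, the function φ_2∘ψ_1 is sub-additive on [0,∞). -/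
open Finset

theorem gumbel_generator_composition_super_sub_additive
    (a₁ a₂ : ℝ) (ha₁ : a₁ ∈ Set.Ioc (0:ℝ) 1) (ha₂ : a₂ ∈ Set.Ioc (0:ℝ) 1) :
    (a₂ ≤ a₁ → ∀ x ≥ (0:ℝ), ∀ y ≥ (0:ℝ),
        Real.log (1 - a₂ / a₁ * (1 - Real.exp x)) +
            Real.log (1 - a₂ / a₁ * (1 - Real.exp y)) ≤
          Real.log (1 - a₂ / a₁ * (1 - Real.exp (x + y)))) ∧
    (a₁ ≤ a₂ → ∀ x ≥ (0:ℝ), ∀ y ≥ (0:ℝ),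
        Real.log (1 - a₂ / a₁ * (1 - Real.exp (x + y))) ≤
          Real.log (1 - a₂ / a₁ * (1 - Real.exp x)) +
            Real.log (1 - a₂ / a₁ * (1 - Real.exp y))) := by
  obtain ⟨h1, h1'⟩ := ha₁
  obtain ⟨h2, h2'⟩ := ha₂
  set c := a₂ / a₁ with hc
  have hcpos : 0 < c := div_pos h2 h1
  have key : ∀ x ≥ (0:ℝ), (1:ℝ) ≤ 1 - c * (1 - Real.exp x) := by
    intro x hx
    nlinarith [Real.one_le_exp hx]
  constructor
  · intro hle x hx y hy
    have hc1 : c ≤ 1 := (div_le_one h1).mpr hle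
    have gx := key x hx
    have gy := key y hy
    have hx' := Real.one_le_exp hx
    have hy' := Real.one_le_exp hy
    rw [← Real.log_mul (by linarith) (by linarith)]
    have hmain : (1 - c * (1 - Real.exp x)) * (1 - c * (1 - Real.exp y))
        ≤ 1 - c * (1 - Real.exp (x + y)) := by
      rw [Real.exp_add]
      nlinarith [mul_nonneg (mul_nonneg (mul_nonneg hcpos.le (sub_nonneg.2 hc1))
        (sub_nonneg.2 hx')) (sub_nonneg.2 hy')]
    exact Real.log_le_log (by nlinarith) hmain
  · intro hle x hx y hy
    have hc1 : 1 ≤ c := (one_le_div h1).mpr hle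
    have gx := key x hx
    have gy := key y hy
    have hx' := Real.one_le_exp hx
    have hy' := Real.one_le_exp hy
    rw [← Real.log_mul (by linarith) (by linarith)]
    have hmain : 1 - c * (1 - Real.exp (x + y))
        ≤ (1 - c * (1 - Real.exp x)) * (1 - c * (1 - Real.exp y)) := by
      rw [Real.exp_add]
      nlinarith [mul_nonneg (mul_nonneg (mul_nonneg hcpos.le (sub_nonneg.2 hc1))
        (sub_nonneg.2 hx')) (sub_nonneg.2 hy')]
    exact Real.log_le_log (by linarith [key (x + y) (by linarith)]) hmain
end
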